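/- arXiv:1501.05828 — 3 statements merged into one kernel-verified Lean document; each statement's English description precedes it below -/
import Mathlib

section
/- Two monotone lattice paths in the plane (consisting of unit north and east steps) whose endpoint pairs interleave must share a common lattice point: if path P goes from p₁ to p₂ and path Q goes from q₁ to q₂, with q₁ weakly below-right of P's start region and q₂ weakly above-left of P's end region so that Q must cross P (formally: q₁ and q₂ lie on opposite sides of the curve formed by P within the bounding rectangle), then P and Q intersect in a lattice point. -/
/-- `p` is a monotone lattice path of length `m`: each step is a unit east or north step. -/
def MonoLatticePath (p : ℕ → ℕ × ℕ) (m : ℕ) : Prop :=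
  ∀ i < m, p (i + 1) = ((p i).1 + 1, (p i).2) ∨ p (i + 1) = ((p i).1, (p i).2 + 1)

private lemma mono_lattice_mono {p : ℕ → ℕ × ℕ} {m : ℕ} (hp : MonoLatticePath p m)
    {i j : ℕ} (hij : i ≤ j) (hj : j ≤ m) :
    (p i).1 ≤ (p j).1 ∧ (p i).2 ≤ (p j).2 ∧
      (p j).1 + (p j).2 = (p i).1 + (p i).2 + (j - i) := by
  induction j, hij using Nat.le_induction with
  | base => simp
  | succ j hij ih =>
    obtain ⟨hx, hy, hs⟩ := ih (le_of_lt (Nat.lt_of_succ_le hj))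
    rcases hp j (Nat.lt_of_succ_le hj) with h | h <;> rw [h] <;> simp <;> omega

/-- Two monotone lattice paths whose endpoint pairs interleave (the second starts weakly
below-right of the first's start and ends weakly above-left of the first's end) share a
common lattice point. -/
theorem monotone_paths_cross (p q : ℕ → ℕ × ℕ) (mp mq : ℕ)
    (hp : MonoLatticePath p mp) (hq : MonoLatticePath q mq)
    (h₁ : (p 0).1 ≤ (q 0).1) (h₂ : (q 0).2 ≤ (p 0).2)
    (h₃ : (q mq).1 ≤ (p mp).1) (h₄ : (p mp).2 ≤ (q mq).2) :
    ∃ i ≤ mp, ∃ j ≤ mq, p i = q j := by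
  by_contra hc
  push_neg at hc
  -- hc : ∀ i ≤ mp, ∀ j ≤ mq, p i ≠ q j
  -- auxiliary step: a witness for j yields a witness for j+1
  have aux : ∀ d i j, j < mq → i ≤ mp → mp - i ≤ d →
      (p i).1 ≤ (q j).1 → (q j).2 ≤ (p i).2 →
      ∃ i' ≤ mp, (p i').1 ≤ (q (j+1)).1 ∧ (q (j+1)).2 ≤ (p i').2 := by
    intro d
    induction d using Nat.strong_induction_on with
    | _ d ih =>
      intro i j hj hi hd hx hy
      rcases hq j hj with hstep | hstep
      · -- q goes east
        exact ⟨i, hi, by rw [hstep]; exact ⟨le_trans hx (Nat.le_succ _), hy⟩⟩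
      · -- q goes north
        rcases lt_or_eq_of_le hy with hlt | heq
        · exact ⟨i, hi, by rw [hstep]; exact ⟨hx, hlt⟩⟩
        · -- (q j).2 = (p i).2
          have hxlt : (p i).1 < (q j).1 := by
            rcases lt_or_eq_of_le hx with h | h
            · exact h
            · exact absurd (Prod.ext h heq.symm) (hc i hi j (le_of_lt hj))
          have himp : i < mp := by
            rcases lt_or_eq_of_le hi with h | h
            · exact h
            · exfalso
              have := (mono_lattice_mono hq (le_of_lt hj) le_rfl).1
              subst h
              omega
          rcases hp i himp with hpstep | hpstep
          · -- p goes east: move witness forward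
            have hd' : mp - (i + 1) < d := by omega
            refine ih _ hd' (i+1) j hj himp (le_refl _) ?_ ?_
            · rw [hpstep]; exact hxlt
            · rw [hpstep]; exact le_of_eq heq
          · -- p goes north: witness for j+1
            refine ⟨i+1, himp, ?_, ?_⟩
            · rw [hpstep, hstep]; exact le_of_lt hxlt
            · rw [hpstep, hstep]; simp; omega
  have key : ∀ j ≤ mq, ∃ i ≤ mp, (p i).1 ≤ (q j).1 ∧ (q j).2 ≤ (p i).2 := by
    intro j
    induction j with
    | zero => exact fun _ => ⟨0, Nat.zero_le _, h₁, h₂⟩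
    | succ j ihj =>
      intro hj
      obtain ⟨i, hi, hx, hy⟩ := ihj (le_of_lt (Nat.lt_of_succ_le hj))
      exact aux (mp - i) i j (Nat.lt_of_succ_le hj) hi le_rfl hx hy
  obtain ⟨i, hi, hx, hy⟩ := key mq le_rfl
  obtain ⟨hmx, hmy, hms⟩ := mono_lattice_mono hp hi le_rfl
  -- p i and p mp have the same y-coordinate, equal to (q mq).2
  have hyeq : (p i).2 = (q mq).2 := by omega
  have hk : i + ((q mq).1 - (p i).1) ≤ mp := by omega
  obtain ⟨h1, h2, h3⟩ := mono_lattice_mono hp (Nat.le_add_right i ((q mq).1 - (p i).1)) hk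
  obtain ⟨h4, h5, h6⟩ := mono_lattice_mono hp hk le_rfl
  refine hc (i + ((q mq).1 - (p i).1)) hk mq le_rfl (Prod.ext ?_ ?_) <;> omega
end

section
/- Reachability in a layered grid graph is transitive through the coarse grid: if x is reachable from w inside block G_l, x lies on the right boundary vertical line of G_l, z also lies on that line strictly above x, and there is a path from some boundary vertex w' of G_l to z inside the block, where w' lies on the bottom boundary to the right of w, then x is reachable from w' inside G_l. -/
/-- A layered grid graph: every edge goes east `(i,j) → (i+1,j)` or north `(i,j) → (i,j+1)`. -/
def IsLGG (E : ℕ × ℕ → ℕ × ℕ → Prop) : Prop :=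
  ∀ u v, E u v → (v.1 = u.1 + 1 ∧ v.2 = u.2) ∨ (v.1 = u.1 ∧ v.2 = u.2 + 1)

/-- Membership in the square block `[α, α+s] × [β, β+s]`. -/
def InSquare (α β s : ℕ) (v : ℕ × ℕ) : Prop :=
  α ≤ v.1 ∧ v.1 ≤ α + s ∧ β ≤ v.2 ∧ v.2 ≤ β + s

/-- Reachability inside the block `[α, α+s] × [β, β+s]`. -/
def ReachInSquare (E : ℕ × ℕ → ℕ × ℕ → Prop) (α β s : ℕ) (u v : ℕ × ℕ) : Prop :=
  Relation.ReflTransGen (fun x y => E x y ∧ InSquare α β s x ∧ InSquare α β s y) u v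

private lemma reach_mono {E : ℕ × ℕ → ℕ × ℕ → Prop} (hE : IsLGG E)
    {α β s : ℕ} {u v : ℕ × ℕ} (h : ReachInSquare E α β s u v) :
    u.1 ≤ v.1 ∧ u.2 ≤ v.2 := by
  induction h with
  | refl => exact ⟨le_refl _, le_refl _⟩
  | tail _ hstep ih =>
    obtain ⟨h1, h2⟩ := ih
    rcases hE _ _ hstep.1 with ⟨e1, e2⟩ | ⟨e1, e2⟩ <;> constructor <;> omega

private lemma reach_column {E : ℕ × ℕ → ℕ × ℕ → Prop} (hE : IsLGG E)
    {α β s : ℕ} {u v : ℕ × ℕ} (h : ReachInSquare E α β s u v) (c : ℕ)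
    (hc1 : u.1 ≤ c) (hc2 : c ≤ v.1) :
    ∃ m, m.1 = c ∧ ReachInSquare E α β s u m ∧ ReachInSquare E α β s m v := by
  revert hc2
  induction h with
  | refl => exact fun hc2 => ⟨u, by omega, .refl, .refl⟩
  | @tail b d hb hstep ih =>
    intro hc2
    by_cases hcb : c ≤ b.1
    · obtain ⟨m, hm, h1, h2⟩ := ih hcb
      exact ⟨m, hm, h1, h2.tail hstep⟩
    · rcases hE _ _ hstep.1 with ⟨e1, e2⟩ | ⟨e1, e2⟩
      · exact ⟨d, by omega, hb.tail hstep, .refl⟩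
      · omega

/-- If `w → x` inside the block with `w` on the bottom boundary and `x` on the right
boundary line, `z` on the right boundary line strictly above `x`, and `w' → z` inside the
block with `w'` on the bottom boundary strictly to the right of `w`, then `x` is reachable
from `w'` inside the block. -/
theorem dfs_crossing_step (E : ℕ × ℕ → ℕ × ℕ → Prop) (hE : IsLGG E)
    (α β s : ℕ) (w w' x z : ℕ × ℕ)
    (hw : w.2 = β) (hw' : w'.2 = β) (hww' : w.1 < w'.1)
    (hwIn : InSquare α β s w) (hw'In : InSquare α β s w')
    (hx : x.1 = α + s) (hz : z.1 = α + s) (hxz : x.2 < z.2)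
    (hxIn : InSquare α β s x) (hzIn : InSquare α β s z)
    (hwx : ReachInSquare E α β s w x) (hw'z : ReachInSquare E α β s w' z) :
    ReachInSquare E α β s w' x := by
  obtain ⟨-, hw'le, -, -⟩ := hw'In
  have key : ∀ p, ReachInSquare E α β s w' p →
      (∃ u : ℕ × ℕ, u.1 = p.1 ∧ p.2 ≤ u.2 ∧ ReachInSquare E α β s w u ∧
        ReachInSquare E α β s u x) ∨ ReachInSquare E α β s w' x := by
    intro p hp
    induction hp with
    | refl =>
      left
      obtain ⟨m, hm1, hm2, hm3⟩ := reach_column hE hwx w'.1 (le_of_lt hww') (by omega)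
      have := (reach_mono hE hm2).2
      exact ⟨m, hm1, by omega, hm2, hm3⟩
    | @tail b d hb hstep ih =>
      rcases ih with ⟨u, hu1, hu2, hwu, hux⟩ | hdone
      · rcases hE _ _ hstep.1 with ⟨e1, e2⟩ | ⟨e1, e2⟩
        · -- east step
          left
          have hd : d.1 ≤ α + s := hstep.2.2.2.1
          obtain ⟨m, hm1, hm2, hm3⟩ := reach_column hE hux d.1 (by omega) (by omega)
          have := (reach_mono hE hm2).2
          exact ⟨m, hm1, by omega, hwu.trans hm2, hm3⟩
        · -- north step
          by_cases hcase : b.2 + 1 ≤ u.2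
          · exact Or.inl ⟨u, by omega, by omega, hwu, hux⟩
          · right
            have hub : u = b := Prod.ext (by omega) (by omega)
            exact hb.trans (hub ▸ hux)
      · exact Or.inr hdone
  rcases key z hw'z with ⟨u, hu1, hu2, hwu, hux⟩ | h
  · have := (reach_mono hE hux).2
    omega
  · exact h
end

section
/- The recurrence S(n) = S(n/k) + c·k·log n for n > k with S(n) = O(k²) for n ≤ k has solution S(n) = O((k/log k)·log² n + k²); in particular, for k = n^{ε/2} with constant ε > 0, S(n) = O(n^ε). -/
lemma space_rec_aux (k c : ℕ) (hk : 2 ≤ k) (S : ℕ → ℕ)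
    (hrec : ∀ n, k < n → (S n : ℝ) ≤ S (n / k) + c * k * Real.log n)
    (hbase : ∀ n, n ≤ k → S n ≤ c * k ^ 2) :
    ∀ n, (S n : ℝ) ≤ ((c : ℝ) + 1) * ((k / Real.log k) * (Real.log n) ^ 2 + (k : ℝ) ^ 2) := by
  have hk1 : (1:ℝ) < k := by exact_mod_cast (by omega : 1 < k)
  have hK : 0 < Real.log k := Real.log_pos hk1
  have hD0 : 0 ≤ (k : ℝ) / Real.log k := by positivity
  intro n
  induction n using Nat.strong_induction_on with
  | _ n ih =>
    by_cases h : n ≤ k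
    · have h1 : (S n : ℝ) ≤ (c : ℝ) * k ^ 2 := by exact_mod_cast hbase n h
      have h2 : 0 ≤ (k / Real.log k) * (Real.log n) ^ 2 := by positivity
      nlinarith [sq_nonneg (k : ℝ), (Nat.cast_nonneg c : (0:ℝ) ≤ c)]
    · push_neg at h
      have hkpos : 0 < k := by omega
      have hdlt : n / k < n := Nat.div_lt_self (by omega) hk
      have h1 := hrec n h
      have h2 := ih (n / k) hdlt
      set L := Real.log n with hL
      set K := Real.log k with hKdef
      have hKL : K ≤ L := Real.log_le_log (by positivity) (by exact_mod_cast h.le)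
      have hL0 : 0 ≤ L := le_trans hK.le hKL
      have hd1 : 1 ≤ n / k := (Nat.one_le_div_iff hkpos).mpr h.le
      have hdlog0 : 0 ≤ Real.log (↑(n / k)) := Real.log_nonneg (by exact_mod_cast hd1)
      have hdle : Real.log (↑(n / k)) ≤ L - K := by
        have h3 : ((n / k : ℕ) : ℝ) ≤ (n : ℝ) / k := Nat.cast_div_le
        have h4 : Real.log (↑(n / k)) ≤ Real.log ((n : ℝ) / k) :=
          Real.log_le_log (by exact_mod_cast hd1) h3
        rwa [Real.log_div (Nat.cast_ne_zero.mpr (by omega)) (Nat.cast_ne_zero.mpr (by omega))] at h4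
      have hsq : (Real.log (↑(n / k))) ^ 2 ≤ (L - K) ^ 2 :=
        pow_le_pow_left₀ hdlog0 hdle 2
      have hDK : (k : ℝ) / K * K = k := div_mul_cancel₀ _ hK.ne'
      have key : (c : ℝ) * k * L + ((c : ℝ) + 1) * ((k / K) * (L - K) ^ 2 + (k : ℝ) ^ 2)
          ≤ ((c : ℝ) + 1) * ((k / K) * L ^ 2 + (k : ℝ) ^ 2) := by
        have hexp : ((c : ℝ) + 1) * ((k / K) * L ^ 2) - ((c : ℝ) + 1) * ((k / K) * (L - K) ^ 2)
            = ((c : ℝ) + 1) * (((k : ℝ) / K * K) * (2 * L - K)) := by ring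
        have hk0 : (0 : ℝ) ≤ k := Nat.cast_nonneg k
        have hc0 : (0 : ℝ) ≤ c := Nat.cast_nonneg c
        rw [hDK] at hexp
        have h5 : (c : ℝ) * k * L ≤ ((c : ℝ) + 1) * ((k : ℝ) * (2 * L - K)) := by
          nlinarith [mul_nonneg hk0 hL0, mul_nonneg hk0 (sub_nonneg.mpr hKL),
            mul_nonneg (mul_nonneg hc0 hk0) (sub_nonneg.mpr hKL)]
        linarith
      have hmono : ((c : ℝ) + 1) * ((k / K) * (Real.log (↑(n / k))) ^ 2 + (k : ℝ) ^ 2)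
          ≤ ((c : ℝ) + 1) * ((k / K) * (L - K) ^ 2 + (k : ℝ) ^ 2) := by
        have := mul_le_mul_of_nonneg_left hsq hD0
        nlinarith [(Nat.cast_nonneg c : (0:ℝ) ≤ c)]
      linarith

/-- The space recurrence `S(n) = S(n/k) + O(k log n)` for `n > k`, `S(n) = O(k²)` for
`n ≤ k`, has solution `S(n) = O((k / log k) · log² n + k²)`; in particular, for
`k = n^{ε/2}` with a constant `ε > 0`, `S(n) = O(n^ε)`. -/
theorem space_recurrence_solution :
    (∀ (k c : ℕ), 2 ≤ k → ∀ S : ℕ → ℕ,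
      (∀ n, k < n → (S n : ℝ) ≤ S (n / k) + c * k * Real.log n) →
      (∀ n, n ≤ k → S n ≤ c * k ^ 2) →
      ∃ C : ℝ, 0 < C ∧ ∀ n : ℕ, 2 ≤ n →
        (S n : ℝ) ≤ C * ((k / Real.log k) * (Real.log n) ^ 2 + (k : ℝ) ^ 2)) ∧
    (∀ ε : ℝ, 0 < ε → ∀ c : ℕ, ∃ C : ℝ, 0 < C ∧
      ∀ (n k : ℕ) (S : ℕ → ℕ), 2 ≤ n → (k : ℝ) = (n : ℝ) ^ (ε / 2) →
        (∀ m, k < m → (S m : ℝ) ≤ S (m / k) + c * k * Real.log m) →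
        (∀ m, m ≤ k → S m ≤ c * k ^ 2) →
        (S n : ℝ) ≤ C * (n : ℝ) ^ ε) := by
  constructor
  · intro k c hk S hrec hbase
    exact ⟨(c : ℝ) + 1, by positivity, fun n _ => space_rec_aux k c hk S hrec hbase n⟩
  · intro ε hε c
    refine ⟨((c : ℝ) + 1) * (4 / ε ^ 2 + 1), by positivity, ?_⟩
    intro n k S hn hkeq hrec hbase
    have hn1 : (1 : ℝ) < n := by exact_mod_cast hn
    have hnpos : (0 : ℝ) < n := by linarith
    have hkr : (1 : ℝ) < k := by
      rw [hkeq]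
      exact (Real.one_lt_rpow_iff_of_pos hnpos).mpr (Or.inl ⟨hn1, by positivity⟩)
    have hk2 : 2 ≤ k := by exact_mod_cast (by exact_mod_cast hkr : 1 < k)
    have haux := space_rec_aux k c hk2 S hrec hbase n
    have hL : 0 < Real.log n := Real.log_pos hn1
    have hlogk : Real.log k = (ε / 2) * Real.log n := by
      rw [hkeq, Real.log_rpow hnpos]
    have hksq : (k : ℝ) ^ 2 = (n : ℝ) ^ ε := by
      rw [hkeq, sq, ← Real.rpow_add hnpos]
      norm_num
    have hlogle : Real.log n ≤ (n : ℝ) ^ (ε / 2) / (ε / 2) :=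
      Real.log_le_rpow_div (Nat.cast_nonneg n) (by positivity)
    have hterm : (k / Real.log k) * (Real.log n) ^ 2 ≤ 4 / ε ^ 2 * (n : ℝ) ^ ε := by
      have h1 : (k : ℝ) / Real.log k * (Real.log n) ^ 2
          = (n : ℝ) ^ (ε / 2) * Real.log n * (2 / ε) := by
        rw [hlogk, hkeq]
        field_simp
      rw [h1]
      have h2 : (n : ℝ) ^ (ε / 2) * Real.log n ≤ (n : ℝ) ^ (ε / 2) * ((n : ℝ) ^ (ε / 2) / (ε / 2)) :=
        mul_le_mul_of_nonneg_left hlogle (by positivity)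
      have h3 : (n : ℝ) ^ (ε / 2) * (n : ℝ) ^ (ε / 2) = (n : ℝ) ^ ε := by
        rw [← Real.rpow_add hnpos]; norm_num
      calc (n : ℝ) ^ (ε / 2) * Real.log n * (2 / ε)
          ≤ (n : ℝ) ^ (ε / 2) * ((n : ℝ) ^ (ε / 2) / (ε / 2)) * (2 / ε) := by
            exact mul_le_mul_of_nonneg_right h2 (by positivity)
        _ = 4 / ε ^ 2 * (n : ℝ) ^ ε := by rw [← h3]; field_simp; ring
    have hc1 : (0 : ℝ) ≤ (c : ℝ) + 1 := by positivity
    calc (S n : ℝ) ≤ ((c : ℝ) + 1) * ((k / Real.log k) * (Real.log n) ^ 2 + (k : ℝ) ^ 2) := haux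
      _ ≤ ((c : ℝ) + 1) * (4 / ε ^ 2 * (n : ℝ) ^ ε + (n : ℝ) ^ ε) := by
          rw [hksq] at *
          exact mul_le_mul_of_nonneg_left (by linarith) hc1
      _ = ((c : ℝ) + 1) * (4 / ε ^ 2 + 1) * (n : ℝ) ^ ε := by ring
end
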